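/- Let z ∈ {0,1}^{N×N} be symmetric with zero diagonal and positive row sums, W its row-normalized adjacency matrix, |δ| < 1, and suppose m_i = β x_i + γ (Σ_j x_j z_{i,j})/(Σ_j z_{i,j}) for x ∈ {0,1}^N and β, γ ∈ ℝ. Let μ = (I_N − δW)^{-1} m. If μ_i depends on coordinate x_j of x (i.e., there exist x, x' differing only in coordinate j with μ_i(x) ≠ μ_i(x')), then either there exists d ≥ 1 with (z^d)_{i,j} > 0, or there exists a unit k ∉ {i,j} and d ≥ 1 with (z^d)_{i,k} > 0 and z_{k,j} = 1. In both cases, i and j are connected by a finite path in the graph z. -/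

import Mathlib

open Matrix

private lemma pow_entry_nonneg {N : ℕ} (z : Matrix (Fin N) (Fin N) ℝ)
    (hz : ∀ i j, 0 ≤ z i j) (d : ℕ) : ∀ i j, 0 ≤ (z ^ d) i j := by
  induction d with
  | zero =>
    intro i j
    rw [pow_zero]
    simp only [Matrix.one_apply]
    split <;> norm_num
  | succ d ih =>
    intro i j
    rw [pow_succ, Matrix.mul_apply]
    exact Finset.sum_nonneg fun c _ => mul_nonneg (ih i c) (hz c j)

private lemma pow_step {N : ℕ} (z : Matrix (Fin N) (Fin N) ℝ)
    (hz : ∀ i j, 0 ≤ z i j) {d : ℕ} {i a b : Fin N}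
    (h1 : 0 < (z ^ d) i a) (h2 : 0 < z a b) : 0 < (z ^ (d + 1)) i b := by
  rw [pow_succ, Matrix.mul_apply]
  have hle : (z ^ d) i a * z a b ≤ ∑ c, (z ^ d) i c * z c b :=
    Finset.single_le_sum (fun c _ => mul_nonneg (pow_entry_nonneg z hz d i c) (hz c b))
      (Finset.mem_univ a)
  exact lt_of_lt_of_le (mul_pos h1 h2) hle

/-- With `μ(x) = (I − δW)⁻¹ m(x)` where
`m(x)_i = β x_i + γ (Σ_j x_j z_{i,j})/(Σ_j z_{i,j})`, if `μ(x)_i` depends on coordinate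
`x_j` (two assignments differing only in coordinate `j` give different values of `μ_i`),
then either there is `d ≥ 1` with `(z^d)_{i,j} > 0`, or there is a third unit `k ∉ {i,j}`
and `d ≥ 1` with `(z^d)_{i,k} > 0` and `z_{k,j} = 1`; in both cases `i` and `j` are
connected by a finite path in the graph `z`. -/
theorem stmt_5 (N : ℕ) (z : Matrix (Fin N) (Fin N) ℝ)
    (hz01 : ∀ i j, z i j = 0 ∨ z i j = 1)
    (hzsym : ∀ i j, z i j = z j i)
    (hzdiag : ∀ i, z i i = 0)
    (hzrow : ∀ i, 0 < ∑ b, z i b)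
    (δ β γ : ℝ) (hδ : |δ| < 1)
    (W : Matrix (Fin N) (Fin N) ℝ) (hW : W = fun i j => z i j / ∑ b, z i b)
    (m : (Fin N → Bool) → Fin N → ℝ)
    (hm : ∀ x i, m x i = β * (if x i then 1 else 0) +
      γ * (∑ j, (if x j then 1 else 0) * z i j) / ∑ j, z i j)
    (μ : (Fin N → Bool) → Fin N → ℝ)
    (hμ : ∀ x, μ x = (1 - δ • W)⁻¹.mulVec (m x))
    (i j : Fin N)
    (hdep : ∃ x x' : Fin N → Bool, (∀ k, k ≠ j → x k = x' k) ∧ x j ≠ x' j ∧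
      μ x i ≠ μ x' i) :
    ((∃ d ≥ 1, 0 < (z ^ d) i j) ∨
      (∃ k, k ≠ i ∧ k ≠ j ∧ ∃ d ≥ 1, 0 < (z ^ d) i k ∧ z k j = 1)) ∧
    (∃ d ≥ 1, 0 < (z ^ d) i j) := by
  have hznn : ∀ a b, 0 ≤ z a b := by
    intro a b; rcases hz01 a b with h | h <;> rw [h] <;> norm_num
  suffices P : ∃ d ≥ 1, 0 < (z ^ d) i j by exact ⟨Or.inl P, P⟩
  by_contra hP
  push_neg at hP
  have hzero : ∀ d, 1 ≤ d → (z ^ d) i j = 0 := fun d hd =>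
    le_antisymm (hP d hd) (pow_entry_nonneg z hznn d i j)
  obtain ⟨x, x', hxx, hxj, hne⟩ := hdep
  by_cases hij : i = j
  · -- then (z^2) i i > 0, contradicting hzero
    subst hij
    obtain ⟨b, hb⟩ : ∃ b, z i b ≠ 0 := by
      by_contra h
      push_neg at h
      have := hzrow i
      rw [Finset.sum_eq_zero (fun b _ => h b)] at this
      exact lt_irrefl 0 this
    have hb1 : 0 < z i b := lt_of_le_of_ne (hznn i b) (Ne.symm hb)
    have hb2 : 0 < z b i := by rw [← hzsym i b]; exact hb1
    have h1 : 0 < (z ^ 1) i b := by rwa [pow_one]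
    have h2 : 0 < (z ^ 2) i i := pow_step z hznn h1 hb2
    exact h2.ne' (hzero 2 (by norm_num))
  · -- main case: i ≠ j
    set Rp : Fin N → Prop := fun a => a = i ∨ ∃ d ≥ 1, 0 < (z ^ d) i a with hRp
    have hRi : Rp i := Or.inl rfl
    have hRstep : ∀ a b, Rp a → z a b ≠ 0 → Rp b := by
      intro a b ha hab
      have hab' : 0 < z a b := lt_of_le_of_ne (hznn a b) (Ne.symm hab)
      rcases ha with rfl | ⟨d, hd, hda⟩
      · exact Or.inr ⟨1, le_refl 1, by rwa [pow_one]⟩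
      · exact Or.inr ⟨d + 1, by omega, pow_step z hznn hda hab'⟩
    have hRnj : ∀ a, Rp a → a ≠ j := by
      intro a ha h
      subst h
      rcases ha with h | ⟨d, hd, hda⟩
      · exact hij h.symm
      · exact hda.ne' (hzero d hd)
    have hRz : ∀ a, Rp a → z a j = 0 := by
      intro a ha
      by_contra h
      exact hRnj j (hRstep a j ha h) rfl
    -- m x and m x' agree on Rp
    have hv : ∀ a, Rp a → m x a = m x' a := by
      intro a ha
      rw [hm, hm]
      have hxa : x a = x' a := hxx a (hRnj a ha)
      have hsum : (∑ c, (if x c then (1:ℝ) else 0) * z a c)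
          = ∑ c, (if x' c then (1:ℝ) else 0) * z a c := by
        refine Finset.sum_congr rfl fun c _ => ?_
        by_cases hc : c = j
        · subst hc; rw [hRz a ha, mul_zero, mul_zero]
        · rw [hxx c hc]
      rw [hxa, hsum]
    by_cases hA : IsUnit (1 - δ • W).det
    · -- invertible case
      let U : Submodule ℝ (Fin N → ℝ) :=
        { carrier := {u | ∀ a, Rp a → u a = 0}
          add_mem' := fun hu hw a ha => by
            simp only [Pi.add_apply, hu a ha, hw a ha, add_zero]
          zero_mem' := fun a _ => rfl
          smul_mem' := fun c u hu a ha => by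
            simp only [Pi.smul_apply, hu a ha, smul_zero] }
      have hUmem : ∀ u : Fin N → ℝ, u ∈ U ↔ ∀ a, Rp a → u a = 0 := fun u => Iff.rfl
      have hTinv : ∀ u ∈ U, (1 - δ • W).mulVecLin u ∈ U := by
        intro u hu
        rw [hUmem] at hu ⊢
        intro a ha
        have hsum : ∀ b, W a b * u b = 0 := by
          intro b
          by_cases hzab : z a b = 0
          · rw [hW]; simp [hzab]
          · rw [hu b (hRstep a b ha hzab), mul_zero]
        show (1 - δ • W).mulVec u a = 0
        rw [Matrix.sub_mulVec, Matrix.one_mulVec, Pi.sub_apply, hu a ha,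
          Matrix.smul_mulVec, Pi.smul_apply]
        have : W.mulVec u a = 0 := by
          rw [Matrix.mulVec, dotProduct]
          exact Finset.sum_eq_zero fun b _ => hsum b
        rw [this, smul_zero, sub_zero]
      let T : U →ₗ[ℝ] U := ((1 - δ • W).mulVecLin).restrict hTinv
      have hAinj : Function.Injective ((1 - δ • W).mulVec) := by
        intro u w h
        have h2 := congrArg ((1 - δ • W)⁻¹.mulVec) h
        rwa [Matrix.mulVec_mulVec, Matrix.mulVec_mulVec, Matrix.nonsing_inv_mul _ hA,
          Matrix.one_mulVec, Matrix.one_mulVec] at h2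
      have hTinj : Function.Injective T := by
        intro u w h
        have h2 : (1 - δ • W).mulVec u.1 = (1 - δ • W).mulVec w.1 := by
          have := congrArg Subtype.val h
          simpa [T, LinearMap.restrict_apply, Matrix.mulVecLin_apply, Matrix.sub_mulVec, Matrix.one_mulVec, Matrix.smul_mulVec] using this
        exact Subtype.ext (hAinj h2)
      have hTsurj : Function.Surjective T := LinearMap.injective_iff_surjective.mp hTinj
      have hvU : (m x - m x') ∈ U := by
        rw [hUmem]
        intro a ha
        simp [hv a ha]
      obtain ⟨⟨w, hwU⟩, hw⟩ := hTsurj ⟨m x - m x', hvU⟩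
      have hwval : (1 - δ • W).mulVec w = m x - m x' := by
        have := congrArg Subtype.val hw
        simpa [T, LinearMap.restrict_apply, Matrix.mulVecLin_apply, Matrix.sub_mulVec, Matrix.one_mulVec, Matrix.smul_mulVec] using this
      have hμeq : (1 - δ • W).mulVec (μ x - μ x') = m x - m x' := by
        rw [Matrix.mulVec_sub, hμ, hμ, Matrix.mulVec_mulVec, Matrix.mulVec_mulVec,
          Matrix.mul_nonsing_inv _ hA, Matrix.one_mulVec, Matrix.one_mulVec]
      have heq : μ x - μ x' = w := hAinj (hμeq.trans hwval.symm)
      apply hne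
      have h0 := hwU i hRi
      rw [← heq, Pi.sub_apply] at h0
      linarith
    · -- non-invertible case: inverse is 0, so μ is identically 0
      have h0 : (1 - δ • W)⁻¹ = 0 := Matrix.nonsing_inv_apply_not_isUnit _ hA
      apply hne
      rw [hμ, hμ, h0, Matrix.zero_mulVec, Matrix.zero_mulVec]
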